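/- arXiv:2401.03943 — 6 statements merged into one kernel-verified Lean document; each statement's English description precedes it below -/
import Mathlib

section
/- Let n ≥ 1 and k ≥ 2 be integers, let H be a pairwise independent family of hash functions from {0,1}^n to {0,1}^k, and let S ⊆ {0,1}^n be a set with 2^(k−2) ≤ |S| ≤ 2^(k−1). Then the probability, over h drawn uniformly at random from H, that the set {x ∈ S : h(x) = 0^k} has exactly one element is at least 1/8. -/
/-- A finite nonempty family `H` of functions from `{0,1}^n` to `{0,1}^k` is pairwise
independent if for every pair of distinct inputs and every pair of target values, the
probability over a uniformly random `h ∈ H` of hitting both values is exactly `2^(-2k)`. -/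
def PairwiseIndepHash {n k : ℕ} (H : Finset ((Fin n → Bool) → (Fin k → Bool))) : Prop :=
  H.Nonempty ∧
    ∀ x x' : Fin n → Bool, x ≠ x' → ∀ y y' : Fin k → Bool,
      ((H.filter (fun h => h x = y ∧ h x' = y')).card : ℝ) / (H.card : ℝ) = 1 / 2 ^ (2 * k)

/-- Valiant–Vazirani isolation lemma: if `2^(k-2) ≤ |S| ≤ 2^(k-1)`, then a random hash from
a pairwise independent family isolates a unique element of `S` in the fiber of `0^k` with
probability at least `1/8`. -/
theorem valiant_vazirani_isolation (n k : ℕ) (hn : 1 ≤ n) (hk : 2 ≤ k)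
    (H : Finset ((Fin n → Bool) → (Fin k → Bool))) (hH : PairwiseIndepHash H)
    (S : Finset (Fin n → Bool)) (hS₁ : 2 ^ (k - 2) ≤ S.card) (hS₂ : S.card ≤ 2 ^ (k - 1)) :
    (1 : ℝ) / 8 ≤
      ((H.filter (fun h =>
          (S.filter (fun x => h x = fun _ => false)).card = 1)).card : ℝ) / (H.card : ℝ) := by
  classical
  obtain ⟨hne, hpi⟩ := hH
  have hN : (0 : ℝ) < (H.card : ℝ) := by exact_mod_cast Finset.card_pos.mpr hne
  set N : ℝ := (H.card : ℝ) with hNdef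
  set z0 : Fin k → Bool := fun _ => false with hz0
  have hP : (0 : ℝ) < (2 : ℝ) ^ k := by positivity
  -- pairwise joint probability, as a count
  have hpair : ∀ x x' : Fin n → Bool, x ≠ x' → ∀ y y' : Fin k → Bool,
      ((H.filter (fun h => h x = y ∧ h x' = y')).card : ℝ) = N / 2 ^ (2 * k) := by
    intro x x' hxx' y y'
    have := hpi x x' hxx' y y'
    rw [div_eq_div_iff hN.ne' (by positivity : ((2:ℝ) ^ (2*k)) ≠ 0)] at this
    rw [eq_div_iff (by positivity : ((2:ℝ) ^ (2*k)) ≠ 0)]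
    linarith
  -- marginal probability, as a count
  have hmarg : ∀ x : Fin n → Bool,
      ((H.filter (fun h => h x = z0)).card : ℝ) = N / 2 ^ k := by
    intro x
    set x' : Fin n → Bool := fun i => !(x i) with hx'd
    have hxx' : x ≠ x' := by
      intro h
      have := congrFun h ⟨0, hn⟩
      simp [hx'd] at this
    have hsum : (H.filter (fun h => h x = z0)).card
        = ∑ y' : Fin k → Bool,
            ((H.filter (fun h => h x = z0)).filter (fun h => h x' = y')).card :=
      Finset.card_eq_sum_card_fiberwise (fun h _ => Finset.mem_univ _)
    have hsum' : ((H.filter (fun h => h x = z0)).card : ℝ)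
        = ∑ y' : Fin k → Bool,
            ((H.filter (fun h => h x = z0 ∧ h x' = y')).card : ℝ) := by
      rw [hsum]
      push_cast
      simp [Finset.filter_filter]
    rw [hsum']
    have : ∀ y' : Fin k → Bool,
        ((H.filter (fun h => h x = z0 ∧ h x' = y')).card : ℝ) = N / 2 ^ (2 * k) :=
      fun y' => hpair x x' hxx' z0 y'
    rw [Finset.sum_congr rfl (fun y' _ => this y'), Finset.sum_const]
    have hcard : (Finset.univ : Finset (Fin k → Bool)).card = 2 ^ k := by
      simp [Finset.card_univ]
    rw [hcard, nsmul_eq_mul]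
    push_cast
    rw [two_mul, pow_add]
    field_simp
  -- the isolation event, split over the isolated element
  set Ef : (Fin n → Bool) → Finset ((Fin n → Bool) → (Fin k → Bool)) :=
    fun x => H.filter (fun h => h x = z0 ∧ ∀ x' ∈ S, x' ≠ x → h x' ≠ z0) with hEf
  have hdisj : ∀ x ∈ S, ∀ x' ∈ S, x ≠ x' → Disjoint (Ef x) (Ef x') := by
    intro x hx x' hx' hne
    rw [Finset.disjoint_left]
    intro h hh hh'
    rw [hEf] at hh hh'
    simp only [Finset.mem_filter] at hh hh'
    exact hh'.2.2 x hx hne hh.2.1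
  have hEeq : H.filter (fun h => (S.filter (fun x => h x = z0)).card = 1)
      = S.biUnion Ef := by
    ext h
    simp only [Finset.mem_filter, Finset.mem_biUnion, hEf]
    constructor
    · rintro ⟨hhH, hc⟩
      obtain ⟨a, ha⟩ := Finset.card_eq_one.mp hc
      have haS : a ∈ S ∧ h a = z0 := by
        have : a ∈ S.filter (fun x => h x = z0) := ha ▸ Finset.mem_singleton_self a
        exact Finset.mem_filter.mp this
      refine ⟨a, haS.1, hhH, haS.2, ?_⟩
      intro x' hx' hnex' hcontra
      exact hnex' (Finset.mem_singleton.mp (ha ▸ Finset.mem_filter.mpr ⟨hx', hcontra⟩))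
    · rintro ⟨x, hxS, hhH, hhx, hall⟩
      refine ⟨hhH, ?_⟩
      rw [Finset.card_eq_one]
      refine ⟨x, ?_⟩
      ext y
      simp only [Finset.mem_filter, Finset.mem_singleton]
      constructor
      · rintro ⟨hyS, hy⟩
        by_contra hne
        exact hall y hyS hne hy
      · rintro rfl
        exact ⟨hxS, hhx⟩
  -- lower bound the count of each piece
  have hpiece : ∀ x ∈ S, ((Ef x).card : ℝ)
      ≥ N / 2 ^ k - ((S.card : ℝ) - 1) * (N / 2 ^ (2 * k)) := by
    intro x hx
    set A : Finset ((Fin n → Bool) → (Fin k → Bool)) := H.filter (fun h => h x = z0) with hA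
    have hsubset : Ef x ⊆ A := by
      intro h hh
      rw [hEf] at hh
      rw [hA]
      simp only [Finset.mem_filter] at hh ⊢
      exact ⟨hh.1, hh.2.1⟩
    have hsdiff : A \ Ef x ⊆ (S.erase x).biUnion
        (fun x' => H.filter (fun h => h x = z0 ∧ h x' = z0)) := by
      intro h hh
      rw [Finset.mem_sdiff, hA] at hh
      obtain ⟨hhA, hhE⟩ := hh
      simp only [Finset.mem_filter] at hhA
      rw [hEf] at hhE
      simp only [Finset.mem_filter, not_and, not_forall] at hhE
      obtain ⟨x', hx'S, hx'ne, hx'val⟩ := hhE hhA.1 hhA.2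
      simp only [not_not] at hx'val
      rw [Finset.mem_biUnion]
      exact ⟨x', Finset.mem_erase.mpr ⟨hx'ne, hx'S⟩,
        Finset.mem_filter.mpr ⟨hhA.1, hhA.2, hx'val⟩⟩
    have hsd_card : ((A \ Ef x).card : ℝ) ≤ ((S.card : ℝ) - 1) * (N / 2 ^ (2 * k)) := by
      calc ((A \ Ef x).card : ℝ)
          ≤ (((S.erase x).biUnion
              (fun x' => H.filter (fun h => h x = z0 ∧ h x' = z0))).card : ℝ) := by
            exact_mod_cast Finset.card_le_card hsdiff
        _ ≤ ∑ x' ∈ S.erase x, ((H.filter (fun h => h x = z0 ∧ h x' = z0)).card : ℝ) := by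
            exact_mod_cast Finset.card_biUnion_le
        _ = ∑ x' ∈ S.erase x, N / 2 ^ (2 * k) := by
            refine Finset.sum_congr rfl (fun x' hx' => ?_)
            exact hpair x x' (Finset.ne_of_mem_erase hx').symm z0 z0
        _ = ((S.erase x).card : ℝ) * (N / 2 ^ (2 * k)) := by
            rw [Finset.sum_const, nsmul_eq_mul]
        _ = ((S.card : ℝ) - 1) * (N / 2 ^ (2 * k)) := by
            rw [Finset.card_erase_of_mem hx]
            have h1 : 1 ≤ S.card := Finset.card_pos.mpr ⟨x, hx⟩
            push_cast [h1]
            ring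
    have hsplit : ((A \ Ef x).card : ℝ) + ((Ef x).card : ℝ) = (A.card : ℝ) := by
      exact_mod_cast Finset.card_sdiff_add_card_eq_card hsubset
    have hAc : (A.card : ℝ) = N / 2 ^ k := hmarg x
    linarith
  -- put everything together
  have hEcard : ((H.filter (fun h => (S.filter (fun x => h x = z0)).card = 1)).card : ℝ)
      = ∑ x ∈ S, ((Ef x).card : ℝ) := by
    rw [hEeq]
    exact_mod_cast Finset.card_biUnion hdisj
  have hlow : ((H.filter (fun h => (S.filter (fun x => h x = z0)).card = 1)).card : ℝ)
      ≥ (S.card : ℝ) * (N / 2 ^ k - ((S.card : ℝ) - 1) * (N / 2 ^ (2 * k))) := by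
    rw [hEcard]
    calc ∑ x ∈ S, ((Ef x).card : ℝ)
        ≥ ∑ x ∈ S, (N / 2 ^ k - ((S.card : ℝ) - 1) * (N / 2 ^ (2 * k))) :=
          Finset.sum_le_sum hpiece
      _ = (S.card : ℝ) * (N / 2 ^ k - ((S.card : ℝ) - 1) * (N / 2 ^ (2 * k))) := by
          rw [Finset.sum_const, nsmul_eq_mul]
  -- arithmetic
  have hm1 : (2 : ℝ) ^ k ≤ 4 * (S.card : ℝ) := by
    have : 2 ^ k ≤ 4 * S.card := by
      have hkk : k - 2 + 2 = k := by omega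
      calc 2 ^ k = 2 ^ (k - 2) * 4 := by
            rw [← hkk, pow_add]
            norm_num [hkk]
        _ ≤ S.card * 4 := by exact Nat.mul_le_mul_right 4 hS₁
        _ = 4 * S.card := by ring
    exact_mod_cast this
  have hm2 : 2 * (S.card : ℝ) ≤ (2 : ℝ) ^ k := by
    have : 2 * S.card ≤ 2 ^ k := by
      calc 2 * S.card ≤ 2 * 2 ^ (k - 1) := by exact Nat.mul_le_mul_left 2 hS₂
        _ = 2 ^ k := by
            have hkk : 1 + (k - 1) = k := by omega
            rw [← hkk, pow_add]
            norm_num [hkk]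
    exact_mod_cast this
  rw [ge_iff_le] at hlow
  set A : ℝ := (S.card : ℝ) with hAd
  have hA0 : (0 : ℝ) ≤ A := Nat.cast_nonneg _
  have key : (2 : ℝ) ^ (2 * k) / 8 ≤ A * 2 ^ k - A * A := by
    rw [two_mul, pow_add]
    nlinarith [mul_nonneg (by linarith : (0:ℝ) ≤ 4 * A - 2 ^ k)
      (by linarith : (0:ℝ) ≤ 2 ^ k - 2 * A)]
  have hP2 : (0 : ℝ) < (2 : ℝ) ^ (2 * k) := by positivity
  have expand : A * (N / 2 ^ k - (A - 1) * (N / 2 ^ (2 * k)))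
      = N * (A * 2 ^ k - A * A + A) / 2 ^ (2 * k) := by
    rw [two_mul, pow_add]
    field_simp
    ring
  have final : N / 8 ≤ A * (N / 2 ^ k - (A - 1) * (N / 2 ^ (2 * k))) := by
    rw [expand, div_le_div_iff₀ (by norm_num) hP2]
    nlinarith [mul_le_mul_of_nonneg_left key hN.le, mul_nonneg hN.le hA0]
  rw [div_le_div_iff₀ (by norm_num) hN]
  nlinarith [le_trans final hlow]
end

section
/- Let n ≥ 1 and suppose that for every k with 2 ≤ k ≤ n+2 we are given a pairwise independent family H_k of hash functions from {0,1}^n to {0,1}^k. Let S ⊆ {0,1}^n be nonempty. If k is drawn uniformly at random from {2, 3, ..., n+2} and then h is drawn uniformly at random from H_k, the probability that the set {x ∈ S : h(x) = 0^k} has exactly one element is at least 1/(8(n+1)). -/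
lemma vv_marginal {n k : ℕ} (hn : 1 ≤ n) {H : Finset ((Fin n → Bool) → (Fin k → Bool))}
    (hH : PairwiseIndepHash H) (x : Fin n → Bool) (y : Fin k → Bool) :
    ((H.filter (fun h => h x = y)).card : ℝ) / (H.card : ℝ) = 1 / 2 ^ k := by
  obtain ⟨x', hx'⟩ : ∃ x' : Fin n → Bool, x' ≠ x := by
    refine ⟨fun i => ! x i, fun h => ?_⟩
    have := congrFun h ⟨0, hn⟩
    simp at this
  have hcard : (H.filter (fun h => h x = y)).card
      = ∑ y' : Fin k → Bool, (H.filter (fun h => h x = y ∧ h x' = y')).card := by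
    rw [Finset.card_eq_sum_card_fiberwise (f := fun h => h x') (t := Finset.univ) (by simp)]
    apply Finset.sum_congr rfl
    intro y' _
    rw [Finset.filter_filter]
  rw [hcard]
  push_cast
  rw [Finset.sum_div]
  have heq : ∀ y' : Fin k → Bool,
      ((H.filter (fun h => h x = y ∧ h x' = y')).card : ℝ) / (H.card : ℝ) = 1 / 2 ^ (2 * k) :=
    fun y' => hH.2 x x' (Ne.symm hx') y y'
  rw [Finset.sum_congr rfl (fun y' _ => heq y')]
  simp only [Finset.sum_const, Finset.card_univ, nsmul_eq_mul]
  have : (Fintype.card (Fin k → Bool) : ℝ) = 2 ^ k := by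
    simp [Fintype.card_fun]
  rw [this]
  rw [two_mul, pow_add]
  field_simp

lemma vv_perk {n k : ℕ} (hn : 1 ≤ n) {H : Finset ((Fin n → Bool) → (Fin k → Bool))}
    (hH : PairwiseIndepHash H) (S : Finset (Fin n → Bool))
    (hlo : (1:ℝ)/4 ≤ (S.card : ℝ) / 2 ^ k) (hhi : (S.card : ℝ) / 2 ^ k ≤ 1/2) :
    (1:ℝ)/8 ≤ ((H.filter (fun h =>
        (S.filter (fun x => h x = fun _ => false)).card = 1)).card : ℝ) / (H.card : ℝ) := by
  set z : Fin k → Bool := fun _ => false with hz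
  set A : (Fin n → Bool) → Finset ((Fin n → Bool) → (Fin k → Bool)) :=
    fun x => H.filter (fun h => h x = z ∧ ∀ x' ∈ S, x' ≠ x → h x' ≠ z) with hA
  set E := H.filter (fun h => (S.filter (fun x => h x = z)).card = 1) with hE
  have hm : (0:ℝ) < (H.card : ℝ) := by exact_mod_cast Finset.card_pos.mpr hH.1
  -- A x ⊆ E, pairwise disjoint
  have hAE : ∀ x ∈ S, A x ⊆ E := by
    intro x hx h hh
    simp only [hA, Finset.mem_filter] at hh
    obtain ⟨hhH, hhx, hother⟩ := hh
    simp only [hE, Finset.mem_filter]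
    refine ⟨hhH, ?_⟩
    have : S.filter (fun x' => h x' = z) = {x} := by
      ext x'
      simp only [Finset.mem_filter, Finset.mem_singleton]
      constructor
      · rintro ⟨hx', hhx'⟩
        by_contra hne
        exact hother x' hx' hne hhx'
      · rintro rfl; exact ⟨hx, hhx⟩
    rw [this]; simp
  have hdisj : ∀ x ∈ S, ∀ x₂ ∈ S, x ≠ x₂ → Disjoint (A x) (A x₂) := by
    intro x hx x₂ hx₂ hne
    rw [Finset.disjoint_left]
    intro h hh1 hh2
    simp only [hA, Finset.mem_filter] at hh1 hh2
    exact hh2.2.2 x hx hne hh1.2.1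
  have hsum_le : ∑ x ∈ S, ((A x).card : ℝ) ≤ (E.card : ℝ) := by
    have : (S.biUnion A).card ≤ E.card := by
      apply Finset.card_le_card
      intro h hh
      obtain ⟨x, hx, hxh⟩ := Finset.mem_biUnion.mp hh
      exact hAE x hx hxh
    calc ∑ x ∈ S, ((A x).card : ℝ) = ((S.biUnion A).card : ℝ) := by
          rw [Finset.card_biUnion hdisj]; push_cast; ring
      _ ≤ (E.card : ℝ) := by exact_mod_cast this
  -- lower bound on card A x
  set p : ℝ := 1 / 2 ^ k with hp
  set N : ℝ := (S.card : ℝ) with hN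
  have hNpos : 0 < N := by
    have : (0:ℝ) < N / 2 ^ k := lt_of_lt_of_le (by norm_num) hlo
    have h2k : (0:ℝ) < 2 ^ k := by positivity
    have h3 : 0 < (N / 2 ^ k) * 2 ^ k := mul_pos this h2k
    rwa [div_mul_cancel₀ _ (ne_of_gt h2k)] at h3
  have hAbound : ∀ x ∈ S, p - (N - 1) * p ^ 2 ≤ ((A x).card : ℝ) / (H.card : ℝ) := by
    intro x hx
    have hsub : H.filter (fun h => h x = z) ⊆
        A x ∪ (S.erase x).biUnion (fun x' => H.filter (fun h => h x = z ∧ h x' = z)) := by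
      intro h hh
      simp only [Finset.mem_filter] at hh
      by_cases hc : ∀ x' ∈ S, x' ≠ x → h x' ≠ z
      · refine Finset.mem_union_left _ ?_
        simp only [hA, Finset.mem_filter]
        exact ⟨hh.1, hh.2, hc⟩
      · push_neg at hc
        obtain ⟨x', hx', hne, hhx'⟩ := hc
        refine Finset.mem_union_right _ (Finset.mem_biUnion.mpr ⟨x', Finset.mem_erase.mpr ⟨hne, hx'⟩, ?_⟩)
        simp [Finset.mem_filter, hh.1, hh.2, hhx']
    have hcardle : ((H.filter (fun h => h x = z)).card : ℝ) ≤
        ((A x).card : ℝ) + ∑ x' ∈ S.erase x, ((H.filter (fun h => h x = z ∧ h x' = z)).card : ℝ) := by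
      have hcardleN : (H.filter (fun h => h x = z)).card ≤
          (A x).card + ∑ x' ∈ S.erase x, (H.filter (fun h => h x = z ∧ h x' = z)).card :=
        le_trans (Finset.card_le_card hsub)
          (le_trans (Finset.card_union_le _ _) (Nat.add_le_add_left Finset.card_biUnion_le _))
      exact_mod_cast hcardleN
    have hdivle : ((H.filter (fun h => h x = z)).card : ℝ) / (H.card : ℝ) ≤
        (((A x).card : ℝ) + ∑ x' ∈ S.erase x, ((H.filter (fun h => h x = z ∧ h x' = z)).card : ℝ)) / (H.card : ℝ) := by
      gcongr
    have hmarg : ((H.filter (fun h => h x = z)).card : ℝ) / (H.card : ℝ) = p :=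
      vv_marginal hn hH x z
    have hpair : ∀ x' ∈ S.erase x,
        ((H.filter (fun h => h x = z ∧ h x' = z)).card : ℝ) / (H.card : ℝ) = p ^ 2 := by
      intro x' hx'
      have hne : x ≠ x' := (Finset.ne_of_mem_erase hx').symm
      have := hH.2 x x' hne z z
      rw [this, hp]
      rw [two_mul, pow_add]
      field_simp
    have hSone : 1 ≤ S.card := Finset.card_pos.mpr ⟨x, hx⟩
    have herase : ((S.erase x).card : ℝ) = N - 1 := by
      rw [Finset.card_erase_of_mem hx, hN]
      push_cast [hSone]
      ring
    have hsumdiv : (∑ x' ∈ S.erase x, ((H.filter (fun h => h x = z ∧ h x' = z)).card : ℝ)) / (H.card : ℝ)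
        = (N - 1) * p ^ 2 := by
      rw [Finset.sum_div, Finset.sum_congr rfl hpair, Finset.sum_const, nsmul_eq_mul, herase]
    rw [hmarg, add_div, hsumdiv] at hdivle
    linarith
  -- put it together
  have hppos : 0 < p := by rw [hp]; positivity
  have hsum2 : N * (p - (N - 1) * p ^ 2) ≤ (E.card : ℝ) / (H.card : ℝ) := by
    have : N * (p - (N - 1) * p ^ 2) = ∑ _x ∈ S, (p - (N - 1) * p ^ 2) := by
      rw [Finset.sum_const, nsmul_eq_mul, hN]
    rw [this]
    calc ∑ _x ∈ S, (p - (N - 1) * p ^ 2) ≤ ∑ x ∈ S, ((A x).card : ℝ) / (H.card : ℝ) :=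
          Finset.sum_le_sum hAbound
      _ = (∑ x ∈ S, ((A x).card : ℝ)) / (H.card : ℝ) := by rw [Finset.sum_div]
      _ ≤ (E.card : ℝ) / (H.card : ℝ) := by gcongr
  have hNp : N * p = N / 2 ^ k := by rw [hp]; ring
  have h1 : (1:ℝ)/4 ≤ N * p := by rw [hNp]; exact hlo
  have h2 : N * p ≤ 1/2 := by rw [hNp]; exact hhi
  have hkey : (1:ℝ)/8 ≤ N * (p - (N - 1) * p ^ 2) := by nlinarith [mul_pos hNpos hppos, sq_nonneg (N*p)]
  calc (1:ℝ)/8 ≤ N * (p - (N - 1) * p ^ 2) := hkey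
    _ ≤ (E.card : ℝ) / (H.card : ℝ) := hsum2


/-- Valiant–Vazirani: picking `k` uniformly from `{2, …, n+2}` and then a uniformly random
hash `h` from a pairwise independent family `H k`, the probability that exactly one element
of the nonempty set `S` hashes to `0^k` is at least `1/(8(n+1))`. -/
theorem valiant_vazirani (n : ℕ) (hn : 1 ≤ n)
    (H : (k : ℕ) → Finset ((Fin n → Bool) → (Fin k → Bool)))
    (hH : ∀ k, 2 ≤ k → k ≤ n + 2 → PairwiseIndepHash (H k))
    (S : Finset (Fin n → Bool)) (hS : S.Nonempty) :
    (1 : ℝ) / (8 * (n + 1)) ≤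
      (1 / (n + 1 : ℝ)) *
        ∑ k ∈ Finset.Icc 2 (n + 2),
          (((H k).filter (fun h =>
              (S.filter (fun x => h x = fun _ => false)).card = 1)).card : ℝ) /
            ((H k).card : ℝ) := by
  set j := Nat.log 2 S.card with hj
  set k₀ := j + 2 with hk₀
  have hSpos : 0 < S.card := Finset.card_pos.mpr hS
  have hjlow : 2 ^ j ≤ S.card := Nat.pow_log_le_self 2 hSpos.ne'
  have hjhigh : S.card < 2 ^ (j + 1) := Nat.lt_pow_succ_log_self (by norm_num) _
  have hScard_le : S.card ≤ 2 ^ n := by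
    calc S.card ≤ Fintype.card (Fin n → Bool) := Finset.card_le_univ S
      _ = 2 ^ n := by simp [Fintype.card_fun]
  have hjn : j ≤ n := by
    have := Nat.log_mono_right (b := 2) hScard_le
    rw [Nat.log_pow (by norm_num)] at this
    exact le_trans this (le_refl n)
  have hk₀mem : k₀ ∈ Finset.Icc 2 (n + 2) := by
    rw [Finset.mem_Icc]
    omega
  have hHk₀ := hH k₀ (by omega) (by omega)
  -- real bounds
  have hlo : (1:ℝ)/4 ≤ (S.card : ℝ) / 2 ^ k₀ := by
    have h1 : (2:ℝ) ^ j ≤ S.card := by exact_mod_cast hjlow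
    have h2 : (0:ℝ) < 2 ^ k₀ := by positivity
    rw [le_div_iff₀ h2, hk₀, pow_add]
    nlinarith [pow_pos (show (0:ℝ) < 2 by norm_num) j]
  have hhi : (S.card : ℝ) / 2 ^ k₀ ≤ 1/2 := by
    have h1 : (S.card : ℝ) ≤ 2 ^ j * 2 := by
      rw [← pow_succ]; exact_mod_cast hjhigh.le
    have h2 : (0:ℝ) < 2 ^ k₀ := by positivity
    rw [div_le_iff₀ h2, hk₀, pow_add]
    nlinarith [pow_pos (show (0:ℝ) < 2 by norm_num) j]
  have hterm : (1:ℝ)/8 ≤ (((H k₀).filter (fun h =>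
      (S.filter (fun x => h x = fun _ => false)).card = 1)).card : ℝ) / ((H k₀).card : ℝ) :=
    vv_perk hn hHk₀ S hlo hhi
  have hnonneg : ∀ k ∈ Finset.Icc 2 (n + 2),
      (0:ℝ) ≤ (((H k).filter (fun h =>
        (S.filter (fun x => h x = fun _ => false)).card = 1)).card : ℝ) / ((H k).card : ℝ) := by
    intro k _
    positivity
  have hsum : (1:ℝ)/8 ≤ ∑ k ∈ Finset.Icc 2 (n + 2),
      (((H k).filter (fun h =>
        (S.filter (fun x => h x = fun _ => false)).card = 1)).card : ℝ) / ((H k).card : ℝ) :=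
    le_trans hterm (Finset.single_le_sum hnonneg hk₀mem)
  calc (1:ℝ) / (8 * (n + 1)) = (1 / (n + 1 : ℝ)) * (1/8) := by
        rw [div_mul_div_comm, one_mul, mul_comm]
    _ ≤ _ := mul_le_mul_of_nonneg_left hsum (by positivity)
end

section
/- Let N ≥ 1 and let search : ({0,1}^N) → PMF(Fin N) be an arbitrary (possibly randomized) search procedure. Fix x ∈ {0,1}^N with x not identically 0. Consider the random process: draw a permutation σ uniformly at random from the symmetric group on Fin N, draw k according to the distribution search(x ∘ σ) (where (x ∘ σ)_i = x_{σ(i)}), and output some(σ(k)) if x_{σ(k)} = 1, and output none otherwise. Then for every index i with x_i = 1, the probability that the output equals some(i) is exactly (probability that the output is not none) divided by the Hamming weight |x|; and for every i with x_i = 0 the probability that the output equals some(i) is 0. In particular, conditioned on the output not being none, the output is uniformly distributed on {i : x_i = 1}. -/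
open scoped ENNReal

/-- Conjugating an arbitrary search procedure by a uniformly random permutation of the
index set turns it into a uniform index sampler: for each `i` with `x i = true`, the
probability of outputting `some i` is exactly `Pr[output ≠ none] / |x|` (where `|x|` is the
Hamming weight of `x`), and indices with `x i = false` are never output. -/
theorem index_sampling_via_random_permutation (N : ℕ) (hN : 1 ≤ N)
    (search : (Fin N → Bool) → PMF (Fin N))
    (x : Fin N → Bool) (hx : ∃ i, x i = true) :
    let out : PMF (Option (Fin N)) :=
      (PMF.uniformOfFintype (Equiv.Perm (Fin N))).bind fun σ =>
        (search (x ∘ σ)).bind fun k =>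
          PMF.pure (if x (σ k) = true then some (σ k) else none)
    (∀ i : Fin N, x i = true →
        out (some i) =
          (1 - out none) / ((Finset.univ.filter (fun j => x j = true)).card : ℝ≥0∞)) ∧
    (∀ i : Fin N, x i = false → out (some i) = 0) := by
  intro out
  have hout : ∀ o : Option (Fin N), out o = ∑' σ : Equiv.Perm (Fin N),
      (PMF.uniformOfFintype (Equiv.Perm (Fin N))) σ *
        ∑' k : Fin N, search (x ∘ σ) k *
          (if o = (if x (σ k) = true then some (σ k) else none) then 1 else 0) := by
    intro o
    simp only [out, PMF.bind_apply, PMF.pure_apply]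
    congr!
  -- zero part
  have hzero : ∀ i : Fin N, x i = false → out (some i) = 0 := by
    intro i hi
    rw [hout]
    refine ENNReal.tsum_eq_zero.2 fun σ => ?_
    have : (∑' k : Fin N, search (x ∘ σ) k *
        (if (some i : Option (Fin N)) = (if x (σ k) = true then some (σ k) else none) then 1 else 0)) = 0 := by
      refine ENNReal.tsum_eq_zero.2 fun k => ?_
      have : (if (some i : Option (Fin N)) = (if x (σ k) = true then some (σ k) else none) then (1:ℝ≥0∞) else 0) = 0 := by
        by_cases h : x (σ k) = true
        · simp only [h, if_true]
          rw [if_neg]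
          intro hsome
          have : σ k = i := (Option.some_injective _ hsome.symm)
          rw [this, hi] at h; exact Bool.false_ne_true h
        · simp [h]
      rw [this, mul_zero]
    rw [this, mul_zero]
  -- symmetry part
  have hsym : ∀ i j : Fin N, x i = true → x j = true → out (some i) = out (some j) := by
    intro i j hi hj
    set τ := Equiv.swap i j with hτ
    have hxτ : ∀ k, x (τ k) = x k := by
      intro k
      rcases eq_or_ne k i with rfl | hki
      · simp [τ, hi, hj]
      rcases eq_or_ne k j with rfl | hkj
      · simp [τ, hi, hj]
      · simp [τ, Equiv.swap_apply_of_ne_of_ne hki hkj]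
    rw [hout, hout]
    rw [← Equiv.tsum_eq (Equiv.mulLeft τ)]
    refine tsum_congr fun σ => ?_
    have huni : ∀ σ' : Equiv.Perm (Fin N),
        (PMF.uniformOfFintype (Equiv.Perm (Fin N))) σ' =
          (PMF.uniformOfFintype (Equiv.Perm (Fin N))) σ := by
      intro σ'; simp [PMF.uniformOfFintype_apply]
    rw [huni]
    congr 1
    have hcomp : x ∘ ⇑(Equiv.mulLeft τ σ) = x ∘ ⇑σ := by
      funext k
      simp [Equiv.mulLeft, Equiv.Perm.mul_apply, hxτ]
    rw [hcomp]
    refine tsum_congr fun k => ?_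
    congr 1
    have h1 : (Equiv.mulLeft τ σ) k = τ (σ k) := by
      simp [Equiv.mulLeft, Equiv.Perm.mul_apply]
    rw [h1, hxτ]
    by_cases h : x (σ k) = true
    · simp only [h, if_true, Option.some.injEq]
      rcases eq_or_ne (σ k) j with h2 | h2
      · simp [h2, τ]
      · have hne : i ≠ τ (σ k) := by
          intro hc
          exact h2 (by simpa [τ] using congrArg τ hc.symm)
        have hne2 : j ≠ σ k := Ne.symm h2
        simp [if_neg hne, if_neg hne2]
    · simp [h]
  -- total mass
  set W := (Finset.univ.filter (fun j => x j = true)) with hW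
  obtain ⟨i0, hi0⟩ := hx
  have hWcard : 0 < W.card := Finset.card_pos.2 ⟨i0, by simp [hW, hi0]⟩
  have htot : out none + ∑ i : Fin N, out (some i) = 1 := by
    have := PMF.tsum_coe out
    rw [tsum_fintype, Fintype.sum_option] at this
    exact this
  have hsum : ∑ i : Fin N, out (some i) = W.card * out (some i0) := by
    rw [← Finset.sum_filter_add_sum_filter_not Finset.univ (fun j => x j = true)]
    have h1 : ∑ i ∈ Finset.univ.filter (fun j => ¬ x j = true), out (some i) = 0 := by
      refine Finset.sum_eq_zero fun i hi => ?_
      simp only [Finset.mem_filter, Bool.not_eq_true] at hi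
      exact hzero i hi.2
    have h2 : ∑ i ∈ W, out (some i) = W.card * out (some i0) := by
      rw [Finset.sum_congr rfl (fun i hi => ?_), Finset.sum_const, nsmul_eq_mul]
      exact hsym i i0 (by simpa [hW] using hi) hi0
    rw [h2, h1, add_zero]
  have hle : out none ≤ 1 := PMF.coe_le_one out none
  have hmain : (W.card : ℝ≥0∞) * out (some i0) = 1 - out none := by
    rw [← hsum]
    exact ENNReal.eq_sub_of_add_eq (PMF.apply_ne_top out none) (by rw [add_comm]; exact htot)
  constructor
  · intro i hi
    have := hsym i i0 hi hi0
    rw [this, ← hmain]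
    rw [ENNReal.eq_div_iff (by exact_mod_cast hWcard.ne') (ENNReal.natCast_ne_top _)]
  · exact hzero
end

section
/- Let n ≥ 1 and k ≥ 1 be integers, let H be a pairwise independent family of hash functions from {0,1}^n to {0,1}^k, let S ⊆ {0,1}^n be nonempty, and for h ∈ H let N(h) = |{y ∈ S : h(y) = 0^k}|. Then for every x ∈ S, the conditional probability, over h uniform in H conditioned on the event h(x) = 0^k, that N(h) = 1 is at least 1/2 − (|S| − 1)·2^(−(k+1)). In particular, if |S| ≤ 2^(k−1), this conditional probability is at least 1/4. -/
/-- For a pairwise independent hash family and `N(h) = |{y ∈ S : h(y) = 0^k}|`, the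
conditional probability that `N(h) = 1` given `h(x) = 0^k` (for `x ∈ S`) is at least
`1/2 - (|S| - 1)·2^(-(k+1))`; in particular it is at least `1/4` when `|S| ≤ 2^(k-1)`. -/
theorem conditional_isolation_probability (n k : ℕ) (hn : 1 ≤ n) (hk : 1 ≤ k)
    (H : Finset ((Fin n → Bool) → (Fin k → Bool))) (hH : PairwiseIndepHash H)
    (S : Finset (Fin n → Bool)) (hS : S.Nonempty)
    (x : Fin n → Bool) (hx : x ∈ S) :
    ((1 : ℝ) / 2 - ((S.card : ℝ) - 1) / 2 ^ (k + 1) ≤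
      ((H.filter (fun h => (h x = fun _ => false) ∧
          (S.filter (fun y => h y = fun _ => false)).card = 1)).card : ℝ) /
        ((H.filter (fun h => h x = fun _ => false)).card : ℝ)) ∧
    (S.card ≤ 2 ^ (k - 1) →
      (1 : ℝ) / 4 ≤
        ((H.filter (fun h => (h x = fun _ => false) ∧
            (S.filter (fun y => h y = fun _ => false)).card = 1)).card : ℝ) /
          ((H.filter (fun h => h x = fun _ => false)).card : ℝ)) := by
  classical
  obtain ⟨hHne, hpi⟩ := hH
  set z : Fin k → Bool := fun _ => false with hzdef
  set A := H.filter (fun h => h x = z) with hAdef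
  set G := H.filter (fun h => (h x = z) ∧ (S.filter (fun y => h y = z)).card = 1) with hGdef
  have hHpos : (0:ℝ) < (H.card : ℝ) := by
    exact_mod_cast hHne.card_pos
  -- a point different from x
  have hxne : ((fun i => !(x i)) : Fin n → Bool) ≠ x := by
    intro hcontra
    have := congrFun hcontra ⟨0, hn⟩
    simp at this
  -- marginal probability
  have hAcard : (A.card : ℝ) = (H.card : ℝ) / 2 ^ k := by
    set x' : Fin n → Bool := fun i => !(x i)
    have h1 : A.card = ∑ y' : Fin k → Bool,
        (H.filter (fun h => h x = z ∧ h x' = y')).card := by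
      rw [Finset.card_eq_sum_card_fiberwise
        (f := fun h => h x') (t := Finset.univ) (fun h _ => Finset.mem_univ _)]
      refine Finset.sum_congr rfl fun y' _ => ?_
      rw [hAdef, Finset.filter_filter]
    have h2 : (A.card : ℝ) / (H.card : ℝ) = ∑ _y' : Fin k → Bool, (1:ℝ)/2^(2*k) := by
      rw [h1]
      push_cast
      rw [Finset.sum_div]
      exact Finset.sum_congr rfl fun y' _ => hpi x x' (Ne.symm hxne) z y'
    have hcardfun : Fintype.card (Fin k → Bool) = 2 ^ k := by simp
    have h2k : (2:ℝ) ^ (2*k) = 2^k * 2^k := by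
      rw [two_mul, pow_add]
    rw [Finset.sum_const, Finset.card_univ, hcardfun, nsmul_eq_mul] at h2
    push_cast at h2
    rw [div_eq_iff (ne_of_gt hHpos)] at h2
    rw [h2, h2k]
    field_simp
  have hApos : (0:ℝ) < (A.card : ℝ) := by
    rw [hAcard]; positivity
  -- G ⊆ A
  have hGA : G ⊆ A := by
    rw [hGdef, hAdef]
    intro h hh
    rw [Finset.mem_filter] at *
    tauto
  -- bad set bound
  have hbad : ((A \ G).card : ℝ) ≤ ((S.card : ℝ) - 1) * ((H.card : ℝ) / 2 ^ (2*k)) := by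
    have hsub : A \ G ⊆ (S.erase x).biUnion
        (fun y => H.filter (fun h => h x = z ∧ h y = z)) := by
      intro h hh
      rw [Finset.mem_sdiff] at hh
      obtain ⟨hhA, hhG⟩ := hh
      rw [hAdef, Finset.mem_filter] at hhA
      obtain ⟨hhH, hhx⟩ := hhA
      have hne1 : (S.filter (fun y => h y = z)).card ≠ 1 := by
        intro hc
        exact hhG (by rw [hGdef, Finset.mem_filter]; exact ⟨hhH, hhx, hc⟩)
      have hxT : x ∈ S.filter (fun y => h y = z) := Finset.mem_filter.mpr ⟨hx, hhx⟩
      obtain ⟨y, hyT, hyx⟩ : ∃ y ∈ S.filter (fun y => h y = z), y ≠ x := by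
        by_contra hcon
        push_neg at hcon
        have : S.filter (fun y => h y = z) = {x} := by
          apply Finset.eq_singleton_iff_unique_mem.mpr
          exact ⟨hxT, hcon⟩
        rw [this] at hne1
        simp at hne1
      rw [Finset.mem_filter] at hyT
      refine Finset.mem_biUnion.mpr ⟨y, Finset.mem_erase.mpr ⟨hyx, hyT.1⟩, ?_⟩
      exact Finset.mem_filter.mpr ⟨hhH, hhx, hyT.2⟩
    calc ((A \ G).card : ℝ)
        ≤ (((S.erase x).biUnion (fun y => H.filter (fun h => h x = z ∧ h y = z))).card : ℝ) := by
          exact_mod_cast Finset.card_le_card hsub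
      _ ≤ ∑ y ∈ S.erase x, ((H.filter (fun h => h x = z ∧ h y = z)).card : ℝ) := by
          exact_mod_cast Finset.card_biUnion_le
      _ = ∑ y ∈ S.erase x, (H.card : ℝ) / 2 ^ (2*k) := by
          refine Finset.sum_congr rfl fun y hy => ?_
          have hxy : x ≠ y := (Finset.mem_erase.mp hy).1.symm
          have := hpi x y hxy z z
          field_simp at this ⊢
          linarith [this]
      _ = ((S.erase x).card : ℝ) * ((H.card : ℝ) / 2 ^ (2*k)) := by
          rw [Finset.sum_const, nsmul_eq_mul]
      _ = ((S.card : ℝ) - 1) * ((H.card : ℝ) / 2 ^ (2*k)) := by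
          rw [Finset.card_erase_of_mem hx]
          have : (1:ℕ) ≤ S.card := hS.card_pos
          push_cast [this]
          ring
  -- main ratio bound
  have hGcard : (A.card : ℝ) - ((S.card : ℝ) - 1) * ((H.card : ℝ) / 2 ^ (2*k)) ≤ (G.card : ℝ) := by
    have h1 : (A \ G).card = A.card - G.card := Finset.card_sdiff_of_subset hGA
    have h2 : G.card ≤ A.card := Finset.card_le_card hGA
    have : ((A \ G).card : ℝ) = (A.card : ℝ) - (G.card : ℝ) := by
      rw [h1]; push_cast [h2]; ring
    linarith [hbad, this.symm.le]
  set t : ℝ := ((S.card : ℝ) - 1) / 2 ^ k with htdef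
  have ht0 : 0 ≤ t := by
    have : (1:ℕ) ≤ S.card := hS.card_pos
    have h1 : (1:ℝ) ≤ (S.card:ℝ) := by exact_mod_cast this
    rw [htdef]
    apply div_nonneg
    · linarith
    · positivity
  have hratio : 1 - t ≤ (G.card : ℝ) / (A.card : ℝ) := by
    rw [le_div_iff₀ hApos]
    have hA2 : ((S.card : ℝ) - 1) * ((H.card : ℝ) / 2 ^ (2*k)) = t * (A.card : ℝ) := by
      rw [htdef, hAcard]
      have h2k : (2:ℝ) ^ (2*k) = 2^k * 2^k := by rw [two_mul, pow_add]
      field_simp [h2k]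
      try ring
    rw [hA2] at hGcard
    nlinarith [hGcard]
  have hratio0 : 0 ≤ (G.card : ℝ) / (A.card : ℝ) := by positivity
  have hhalf : ((S.card : ℝ) - 1) / 2 ^ (k+1) = t / 2 := by
    rw [htdef, pow_succ]
    ring
  have main : (1 : ℝ) / 2 - ((S.card : ℝ) - 1) / 2 ^ (k + 1) ≤ (G.card : ℝ) / (A.card : ℝ) := by
    rw [hhalf]
    rcases le_or_gt t 1 with h | h
    · linarith
    · linarith
  constructor
  · exact main
  · intro hScard
    have hSR : (S.card : ℝ) ≤ 2 ^ (k-1) := by exact_mod_cast hScard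
    have hkk : (2:ℝ) ^ (k+1) = 2 ^ (k-1) * 4 := by
      have : k + 1 = (k - 1) + 2 := by omega
      rw [this, pow_add]; norm_num
    have hpow : (0:ℝ) < 2 ^ (k-1) := by positivity
    have h14 : ((S.card : ℝ) - 1) / 2 ^ (k+1) ≤ 1/4 := by
      rw [hkk, div_le_iff₀ (by positivity)]
      nlinarith
    linarith [main, h14]
end

section
/- Let n ≥ 1 and k ≥ 2 be integers, let H be a pairwise independent family of hash functions from {0,1}^n to {0,1}^k, and let S ⊆ {0,1}^n satisfy 2^(k−2) ≤ |S| ≤ 2^(k−1). For h ∈ H let N(h) = |{y ∈ S : h(y) = 0^k}|. Then for every x ∈ S, the conditional probability over h uniform in H that h(x) = 0^k given that N(h) = 1 is at most 4/|S|. In other words, conditioned on isolation succeeding, each element of S is the isolated element with probability at most 4/|S| (almost-uniform isolation). -/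
open Finset

section Isolation

variable {α β : Type*} [DecidableEq β] (H : Finset (α → β)) (S : Finset α) (z : β)

theorem card_filter_card_filter_eq_one_eq_sum :
    #(H.filter fun h => #(S.filter fun u => h u = z) = 1) =
      ∑ y ∈ S, #(H.filter fun h => h y = z ∧ #(S.filter fun u => h u = z) = 1) := by
  rw [card_filter]
  calc _ = ∑ h ∈ H, #(S.filter fun y => h y = z ∧ #(S.filter fun u => h u = z) = 1) := by
        refine sum_congr rfl fun h _ => ?_
        by_cases hN : #(S.filter fun u => h u = z) = 1 <;> simp [hN]
    _ = _ := (sum_card_bipartiteAbove_eq_sum_card_bipartiteBelow _).symm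

theorem card_filter_eq_le_card_isolated_add [DecidableEq α] {y : α} (hy : y ∈ S) :
    #(H.filter fun h => h y = z) ≤
      #(H.filter fun h => h y = z ∧ #(S.filter fun u => h u = z) = 1) +
        ∑ w ∈ S.erase y, #(H.filter fun h => h y = z ∧ h w = z) := by
  classical
  have hcover : (H.filter fun h => h y = z) ⊆
      (H.filter fun h => h y = z ∧ #(S.filter fun u => h u = z) = 1) ∪
        (S.erase y).biUnion fun w => H.filter fun h => h y = z ∧ h w = z := by
    intro h hh
    rw [mem_filter] at hh
    by_cases hN : #(S.filter fun u => h u = z) = 1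
    · exact mem_union_left _ (mem_filter.mpr ⟨hh.1, hh.2, hN⟩)
    · have hyN : y ∈ S.filter fun u => h u = z := mem_filter.mpr ⟨hy, hh.2⟩
      have hN2 : 1 < #(S.filter fun u => h u = z) := by
        have := card_pos.mpr ⟨y, hyN⟩
        omega
      obtain ⟨w, hw, hwy⟩ := exists_mem_ne hN2 y
      rw [mem_filter] at hw
      exact mem_union_right _ <|
        mem_biUnion.mpr ⟨w, mem_erase.mpr ⟨hwy, hw.1⟩, mem_filter.mpr ⟨hh.1, hh.2, hw.2⟩⟩
  exact (card_le_card hcover).trans <| (card_union_le _ _).trans <|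
    Nat.add_le_add_left card_biUnion_le _

end Isolation

theorem two_mul_sub_one_le_two_pow {s k : ℕ} (hs : s ≤ 2 ^ (k - 1)) : 2 * (s - 1) ≤ 2 ^ k := by
  cases k with
  | zero => simp_all
  | succ k => rw [Nat.add_sub_cancel] at hs; rw [pow_succ]; omega

namespace PairwiseIndepHash

variable {n k : ℕ} {H : Finset ((Fin n → Bool) → (Fin k → Bool))}

theorem card_filter_and (hH : PairwiseIndepHash H) {x x' : Fin n → Bool} (hxx' : x ≠ x')
    (y y' : Fin k → Bool) :
    (#(H.filter fun h => h x = y ∧ h x' = y') : ℝ) = #H / 2 ^ (2 * k) := by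
  have hH0 : (#H : ℝ) ≠ 0 := by exact_mod_cast hH.1.card_pos.ne'
  rw [← div_mul_cancel₀ (#(H.filter fun h => h x = y ∧ h x' = y') : ℝ) hH0, hH.2 x x' hxx' y y']
  ring

theorem card_filter (hH : PairwiseIndepHash H) (hn : 0 < n) (x : Fin n → Bool)
    (y : Fin k → Bool) : (#(H.filter fun h => h x = y) : ℝ) = #H / 2 ^ k := by
  have : Nonempty (Fin n) := ⟨⟨0, hn⟩⟩
  obtain ⟨x', hx'⟩ := exists_ne x
  rw [card_eq_sum_card_fiberwise (f := fun h => h x') (t := univ) fun _ _ => mem_univ _]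
  simp only [filter_filter, Nat.cast_sum, hH.card_filter_and hx'.symm, sum_const, card_univ,
    Fintype.card_fun, Fintype.card_bool, Fintype.card_fin, nsmul_eq_mul, Nat.cast_pow]
  field_simp
  ring

theorem div_two_pow_succ_le_card_isolated (hH : PairwiseIndepHash H) (hn : 0 < n)
    {S : Finset (Fin n → Bool)} (hS : #S ≤ 2 ^ (k - 1)) {y : Fin n → Bool} (hy : y ∈ S)
    (z : Fin k → Bool) :
    (#H / 2 ^ (k + 1) : ℝ) ≤ #(H.filter fun h => h y = z ∧ #(S.filter fun u => h u = z) = 1) := by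
  have hunion : (#H / 2 ^ k : ℝ) ≤
      #(H.filter fun h => h y = z ∧ #(S.filter fun u => h u = z) = 1) +
        #(S.erase y) * (#H / 2 ^ (2 * k)) := by
    have h := (Nat.cast_le (α := ℝ)).mpr (card_filter_eq_le_card_isolated_add H S z hy)
    push_cast at h
    rwa [hH.card_filter hn,
      sum_congr rfl fun w hw => hH.card_filter_and (mem_erase.mp hw).1.symm z z, sum_const,
      nsmul_eq_mul] at h
  have hS' : (2 * #(S.erase y) : ℝ) ≤ 2 ^ k := by
    rw [card_erase_of_mem hy]
    exact_mod_cast two_mul_sub_one_le_two_pow hS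
  set c : ℝ := #H / 2 ^ (2 * k)
  have hc : 0 ≤ c := by positivity
  have hk : (#H / 2 ^ k : ℝ) = 2 ^ k * c := by simp only [c]; field_simp; ring
  have hk1 : (#H / 2 ^ (k + 1) : ℝ) = 2 ^ k * c / 2 := by simp only [c]; field_simp; ring
  nlinarith

end PairwiseIndepHash

theorem almost_uniform_isolation_general (n k : ℕ) (hn : 1 ≤ n)
    (H : Finset ((Fin n → Bool) → (Fin k → Bool))) (hH : PairwiseIndepHash H)
    (S : Finset (Fin n → Bool)) (hS₂ : S.card ≤ 2 ^ (k - 1))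
    (x : Fin n → Bool) (hx : x ∈ S) :
    ((H.filter (fun h => (h x = fun _ => false) ∧
        (S.filter (fun y => h y = fun _ => false)).card = 1)).card : ℝ) /
      ((H.filter (fun h => (S.filter (fun y => h y = fun _ => false)).card = 1)).card : ℝ)
    ≤ 4 / (S.card : ℝ) := by
  set b : ℝ := #H / 2 ^ (k + 1)
  have hb : 0 < b := by have := hH.1.card_pos; positivity
  have hnum : ((H.filter fun h => (h x = fun _ => false) ∧
      #(S.filter fun y => h y = fun _ => false) = 1).card : ℝ) ≤ 2 * b :=
    calc _ ≤ (#(H.filter fun h => h x = fun _ => false) : ℝ) :=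
          Nat.cast_le.mpr <| card_le_card <| monotone_filter_right _ fun _ _ => And.left
      _ = 2 * b := by rw [hH.card_filter hn]; simp only [b, pow_succ]; ring
  have hden : #S * b ≤
      ((H.filter fun h => #(S.filter fun y => h y = fun _ => false) = 1).card : ℝ) := by
    rw [card_filter_card_filter_eq_one_eq_sum, Nat.cast_sum, ← nsmul_eq_mul, ← sum_const]
    exact sum_le_sum fun y hy => hH.div_two_pow_succ_le_card_isolated hn hS₂ hy _
  have hS0 : (0 : ℝ) < #S := by exact_mod_cast card_pos.mpr ⟨x, hx⟩
  calc _ ≤ 2 * b / (#S * b) := div_le_div₀ (by positivity) hnum (by positivity) hden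
    _ = 2 / #S := mul_div_mul_right _ _ hb.ne'
    _ ≤ 4 / #S := by gcongr; norm_num

/-- Almost-uniform isolation: if `2^(k-2) ≤ |S| ≤ 2^(k-1)`, then conditioned on the hash
isolating a unique element of `S` (the event `N(h) = 1`), each fixed `x ∈ S` is the isolated
element with probability at most `4/|S|`. -/
theorem almost_uniform_isolation (n k : ℕ) (hn : 1 ≤ n) (hk : 2 ≤ k)
    (H : Finset ((Fin n → Bool) → (Fin k → Bool))) (hH : PairwiseIndepHash H)
    (S : Finset (Fin n → Bool)) (hS₁ : 2 ^ (k - 2) ≤ S.card) (hS₂ : S.card ≤ 2 ^ (k - 1))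
    (x : Fin n → Bool) (hx : x ∈ S) :
    ((H.filter (fun h => (h x = fun _ => false) ∧
        (S.filter (fun y => h y = fun _ => false)).card = 1)).card : ℝ) /
      ((H.filter (fun h => (S.filter (fun y => h y = fun _ => false)).card = 1)).card : ℝ)
    ≤ 4 / (S.card : ℝ) :=
  almost_uniform_isolation_general n k hn H hH S hS₂ x hx
end

section
/- Let n ≥ 1 and k ≥ 1 be integers, let ε ≥ 0 be a real number, set m = n², and let μ be a probability distribution on the set of functions from Fin m to Fin k such that μ assigns probability at most (1 + ε)/k^m to each individual function. Let g = ⌈k/n⌉. Then the probability under μ that every coordinate takes a value ≥ g (i.e., μ{s : ∀ t, g ≤ s(t)}) is at most (1 + ε) · (1 − 1/n)^(n²). -/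
lemma aux_card (k g : ℕ) :
    (Finset.univ.filter (fun x : Fin k => g ≤ x.val)).card = k - g := by
  rcases le_or_gt k g with h | h
  · rw [Nat.sub_eq_zero_of_le h, Finset.card_eq_zero, Finset.filter_eq_empty_iff]
    intro x _
    have := x.isLt
    omega
  · have : Finset.univ.filter (fun x : Fin k => g ≤ x.val) = Finset.Ici (⟨g, h⟩ : Fin k) := by
      ext x; simp [Fin.le_def]
    rw [this, Fin.card_Ici]

/-- Single-round progress bound: if `n²` samples are drawn from a linearly ordered
solution set of size `k` almost-uniformly (each joint outcome of the `n²` samples having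
probability at most `(1+ε)/k^(n²)`), then the probability that every sample lands among
the top `k - ⌈k/n⌉` solutions (i.e., misses the smallest `⌈k/n⌉` solutions) is at most
`(1+ε)·(1 - 1/n)^(n²)`. -/
theorem single_round_progress_bound (n k : ℕ) (hn : 1 ≤ n) (hk : 1 ≤ k)
    (ε : ℝ) (hε : 0 ≤ ε)
    (μ : (Fin (n ^ 2) → Fin k) → ℝ)
    (hnonneg : ∀ s, 0 ≤ μ s)
    (hsum : ∑ s : Fin (n ^ 2) → Fin k, μ s = 1)
    (hbound : ∀ s, μ s ≤ (1 + ε) / (k : ℝ) ^ (n ^ 2)) :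
    ∑ s ∈ Finset.univ.filter
        (fun s : Fin (n ^ 2) → Fin k => ∀ t, ⌈(k : ℝ) / (n : ℝ)⌉₊ ≤ (s t : ℕ)), μ s
      ≤ (1 + ε) * (1 - 1 / (n : ℝ)) ^ (n ^ 2) := by
  set g : ℕ := ⌈(k : ℝ) / (n : ℝ)⌉₊ with hg
  have hkpos : (0:ℝ) < k := by exact_mod_cast hk
  have hnpos : (0:ℝ) < n := by exact_mod_cast hn
  -- card of filtered set
  have hset : Finset.univ.filter (fun s : Fin (n ^ 2) → Fin k => ∀ t, g ≤ (s t : ℕ))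
      = Fintype.piFinset (fun _ : Fin (n ^ 2) => Finset.univ.filter (fun x : Fin k => g ≤ x.val)) := by
    ext s; simp
  have hcard : (Finset.univ.filter (fun s : Fin (n ^ 2) → Fin k => ∀ t, g ≤ (s t : ℕ))).card
      = (k - g) ^ (n ^ 2) := by
    rw [hset, Fintype.card_piFinset]
    simp [aux_card]
  have hsum_le := Finset.sum_le_card_nsmul
    (Finset.univ.filter (fun s : Fin (n ^ 2) → Fin k => ∀ t, g ≤ (s t : ℕ)))
    μ ((1 + ε) / (k : ℝ) ^ (n ^ 2)) (fun s _ => hbound s)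
  rw [hcard, nsmul_eq_mul] at hsum_le
  refine hsum_le.trans ?_
  have hfrac : ((k - g : ℕ) : ℝ) ≤ (k : ℝ) * (1 - 1 / n) := by
    have hgk : (k : ℝ) / n ≤ (g : ℝ) := Nat.le_ceil _
    rcases le_or_gt g k with h | h
    · rw [Nat.cast_sub h]
      have : (k:ℝ) * (1 - 1/n) = k - k/n := by ring
      rw [this]; linarith
    · rw [Nat.sub_eq_zero_of_le h.le, Nat.cast_zero]
      have h1 : (1:ℝ)/n ≤ 1 := by
        rw [div_le_one hnpos]; exact_mod_cast hn
      exact mul_nonneg hkpos.le (by linarith)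
  have hpow : ((k - g : ℕ) : ℝ) ^ (n ^ 2) ≤ ((k:ℝ) * (1 - 1/n)) ^ (n ^ 2) :=
    pow_le_pow_left₀ (by positivity) hfrac (n ^ 2)
  have hkm : (0:ℝ) < (k:ℝ) ^ (n ^ 2) := by positivity
  push_cast
  calc ((k - g : ℕ):ℝ) ^ (n ^ 2) * ((1+ε) / (k:ℝ)^(n ^ 2))
      ≤ ((k:ℝ) * (1 - 1/n)) ^ (n ^ 2) * ((1+ε) / (k:ℝ)^(n ^ 2)) := by
        apply mul_le_mul_of_nonneg_right hpow; positivity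
    _ = (1 + ε) * (1 - 1/(n:ℝ)) ^ (n ^ 2) := by
        rw [mul_pow]; field_simp
  done
end
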